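/- arXiv:1010.0627 — 3 statements merged into one kernel-verified Lean document; each statement's English description precedes it below -/
import Mathlib

section
/- Let $c>0$, $\theta,\delta,\sigma>0$ with $\mu=\theta\sigma^2$, and let $g$ be twice differentiable at $y>0$ with $c+g(y)\ne 0$ and $g(y)\ne 0$. Define $\tilde{\mu}(y)=\frac{\mu g'(y)y+\frac{\sigma^2}{2}g''(y)y^2-\delta(g(y)-g'(y)y)(1+g(y)/c)}{g(y)}$ and $\tilde{\sigma}(y)=\frac{\sigma g'(y)y}{g(y)}$. Then the Merton-rule identity $\frac{\tilde{\mu}(y)}{\tilde{\sigma}(y)^2}=\frac{g(y)}{c+g(y)}$ holds if and only if $g''(y)=\frac{2g'(y)^2}{c+g(y)}-\frac{2\theta g'(y)}{y}+\frac{2\delta}{\sigma^2}\left(1+\frac{g(y)}{c}\right)\left(\frac{g(y)}{y^2}-\frac{g'(y)}{y}\right)$, provided $g'(y)\ne 0$. -/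
/-!
With `a = g y`, `b = g' y`, `d = g'' y`, the common factor `1 / g y` cancels from
`μ̃ / σ̃²`, so Merton's rule reads `N (c + a) = (σ b y)²` for the drift numerator `N`.
That equation is affine in `d` with leading coefficient `σ² y² (c + a) / 2 ≠ 0`, and solving
it for `d` gives the shadow-price ODE.
-/

theorem div_div_sq_eq_div_add_iff {K : Type*} [Field K] {N s a c : K}
    (ha : a ≠ 0) (hs : s ≠ 0) (hca : c + a ≠ 0) :
    N / a / (s / a) ^ 2 = a / (c + a) ↔ N * (c + a) = s ^ 2 := by
  have hcancel : N / a / (s / a) ^ 2 = a * N / s ^ 2 := by field_simp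
  rw [hcancel, div_eq_div_iff (pow_ne_zero 2 hs) hca, mul_assoc, mul_right_inj' ha]

theorem shadow_price_ode_iff {K : Type*} [Field K] [NeZero (2 : K)] {a b d y c θ δ σ : K}
    (hy : y ≠ 0) (hσ : σ ≠ 0) (hc : c ≠ 0) (hca : c + a ≠ 0) :
    (θ * σ ^ 2 * b * y + σ ^ 2 / 2 * d * y ^ 2 - δ * (a - b * y) * (1 + a / c)) * (c + a)
        = (σ * b * y) ^ 2 ↔
      d = 2 * b ^ 2 / (c + a) - 2 * θ * b / y
        + 2 * δ / σ ^ 2 * (1 + a / c) * (a / y ^ 2 - b / y) := by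
  have hlinear :
      (θ * σ ^ 2 * b * y + σ ^ 2 / 2 * d * y ^ 2 - δ * (a - b * y) * (1 + a / c)) * (c + a)
          - (σ * b * y) ^ 2
        = σ ^ 2 * y ^ 2 * (c + a) / 2 * (d - (2 * b ^ 2 / (c + a) - 2 * θ * b / y
          + 2 * δ / σ ^ 2 * (1 + a / c) * (a / y ^ 2 - b / y))) := by
    field_simp
    ring
  have hcoef : σ ^ 2 * y ^ 2 * (c + a) / 2 ≠ 0 := by simp [hσ, hy, hca, NeZero.ne]
  rw [← sub_eq_zero, hlinear, mul_eq_zero, or_iff_right hcoef, sub_eq_zero]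

theorem merton_rule_iff_ode_general
    (c θ δ σ μ : ℝ) (hc : 0 < c) (hσ : 0 < σ)
    (hμ : μ = θ * σ ^ 2)
    (g : ℝ → ℝ) (y : ℝ) (hy : 0 < y)
    (hden : c + g y ≠ 0) (hgy : g y ≠ 0) (hg' : deriv g y ≠ 0) :
    (let μt : ℝ := (μ * deriv g y * y + σ ^ 2 / 2 * deriv (deriv g) y * y ^ 2
        - δ * (g y - deriv g y * y) * (1 + g y / c)) / g y;
     let σt : ℝ := σ * deriv g y * y / g y;
     μt / σt ^ 2 = g y / (c + g y)) ↔
    deriv (deriv g) y = 2 * (deriv g y) ^ 2 / (c + g y) - 2 * θ * deriv g y / y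
      + 2 * δ / σ ^ 2 * (1 + g y / c) * (g y / y ^ 2 - deriv g y / y) := by
  subst hμ
  have hσt : σ * deriv g y * y ≠ 0 := mul_ne_zero (mul_ne_zero hσ.ne' hg') hy.ne'
  exact (div_div_sq_eq_div_add_iff hgy hσt hden).trans
    (shadow_price_ode_iff hy.ne' hσ.ne' hc.ne' hden)

/-- Merton's rule for the candidate shadow price is equivalent to the
shadow-price ODE. -/
theorem merton_rule_iff_ode
    (c θ δ σ μ : ℝ) (hc : 0 < c) (hθ : 0 < θ) (hδ : 0 < δ) (hσ : 0 < σ)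
    (hμ : μ = θ * σ ^ 2)
    (g : ℝ → ℝ) (y : ℝ) (hy : 0 < y)
    (hg1 : DifferentiableAt ℝ g y) (hg2 : DifferentiableAt ℝ (deriv g) y)
    (hden : c + g y ≠ 0) (hgy : g y ≠ 0) (hg' : deriv g y ≠ 0) :
    (let μt : ℝ := (μ * deriv g y * y + σ ^ 2 / 2 * deriv (deriv g) y * y ^ 2
        - δ * (g y - deriv g y * y) * (1 + g y / c)) / g y;
     let σt : ℝ := σ * deriv g y * y / g y;
     μt / σt ^ 2 = g y / (c + g y)) ↔
    deriv (deriv g) y = 2 * (deriv g y) ^ 2 / (c + g y) - 2 * θ * deriv g y / y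
      + 2 * δ / σ ^ 2 * (1 + g y / c) * (g y / y ^ 2 - deriv g y / y) :=
  merton_rule_iff_ode_general c θ δ σ μ hc hσ hμ g y hy hden hgy hg'
end

section
/- Let $g(s,c)$ be the analytic solution of $g''=F(s,g,g',c)$ with $g(1,c)=\partial_s g(1,c)=1$ (with $F$ as in the shadow-price ODE, $\theta\in(0,1)$, $\bar{c}=(1-\theta)/\theta$). Then the function $\Phi(s,c)=\frac{g(s,c)-s\,\partial_s g(s,c)}{s-1}$ (extended by continuity to $s=1$) satisfies $\Phi(1,\bar{c})=0$ and $\partial_s\Phi(1,\bar{c})=\theta(\theta-1)\ne 0$. Consequently, by the implicit function theorem there is an analytic function $H(c)$ with $H(\bar{c})=1$, $H'(\bar{c})=\frac{2\theta}{1-\theta}$, and $\Phi(H(c),c)=0$ for $c$ near $\bar{c}$. -/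
/-!
Write `N = g - s ∂ₛg`. The initial conditions give `N(1, c) = 0`, so Hadamard's lemma factors
`N = (s - 1) Ψ` with `Ψ(s, c) = ∫₀¹ ∂ₛN(1 + t(s - 1), c) dt`, which is analytic because the power
series of `∂ₛN` can be integrated term by term; `Φ = Ψ` by continuity. As `∂ₛN = -s ∂ₛ²g`, the ODE
at `s = 1` gives `Ψ(1, c) = 2θ - 2/(c + 1)`, which vanishes at `c̄` with `∂_cΨ(1, c̄) = 2θ²`, and
differentiating the ODE once more gives `∂ₛΨ(1, c̄) = ∂ₛ²N(1, c̄)/2 = θ(θ - 1)`. The analytic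
implicit function theorem then yields `H`, with `H'(c̄) = -∂_cΨ/∂ₛΨ = 2θ/(1 - θ)`.
-/

open Set Metric Filter

open scoped Topology ContDiff ENNReal

lemma Prod.norm_smul_fst_le {E₁ E₂ : Type*} [SeminormedAddCommGroup E₁] [NormedSpace ℝ E₁]
    [SeminormedAddCommGroup E₂] {t : ℝ} (ht : |t| ≤ 1) (y : E₁ × E₂) :
    ‖((t • y.1, y.2) : E₁ × E₂)‖ ≤ ‖y‖ := by
  rw [Prod.norm_def, Prod.norm_def, norm_smul, Real.norm_eq_abs]
  exact max_le_max (mul_le_of_le_one_left (norm_nonneg _) ht) le_rfl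

section SegmentIntegral

variable {E₁ E₂ G : Type*} [NormedAddCommGroup E₁] [NormedSpace ℝ E₁]
  [NormedAddCommGroup E₂] [NormedSpace ℝ E₂] [NormedAddCommGroup G] [NormedSpace ℝ G]

namespace ContinuousLinearMap

def scaleFst (t : ℝ) : E₁ × E₂ →L[ℝ] E₁ × E₂ :=
  t • (inl ℝ E₁ E₂ ∘L fst ℝ E₁ E₂) + inr ℝ E₁ E₂ ∘L snd ℝ E₁ E₂

@[simp] lemma scaleFst_apply (t : ℝ) (y : E₁ × E₂) : scaleFst t y = (t • y.1, y.2) := by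
  simp [scaleFst]

lemma continuous_scaleFst : Continuous fun t : ℝ => (scaleFst t : E₁ × E₂ →L[ℝ] E₁ × E₂) := by
  unfold scaleFst
  fun_prop

lemma norm_scaleFst_le {t : ℝ} (ht : |t| ≤ 1) : ‖(scaleFst t : E₁ × E₂ →L[ℝ] E₁ × E₂)‖ ≤ 1 := by
  refine opNorm_le_bound _ zero_le_one fun y => ?_
  rw [one_mul, scaleFst_apply]
  exact Prod.norm_smul_fst_le ht y

end ContinuousLinearMap

open ContinuousLinearMap in
lemma ContinuousMultilinearMap.continuous_compContinuousLinearMap_scaleFst {n : ℕ}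
    (f : ContinuousMultilinearMap ℝ (fun _ : Fin n => E₁ × E₂) G) :
    Continuous fun t : ℝ => f.compContinuousLinearMap fun _ => scaleFst t := by
  have h : Continuous fun t : ℝ =>
      compContinuousLinearMapContinuousMultilinear ℝ (fun _ : Fin n => E₁ × E₂)
        (fun _ => E₁ × E₂) G fun _ => scaleFst t :=
    (ContinuousMultilinearMap.cont _).comp (continuous_pi fun _ => continuous_scaleFst)
  simpa using h.clm_apply (continuous_const (y := f))

namespace FormalMultilinearSeries

open ContinuousLinearMap

noncomputable def fstSegmentIntegral (p : FormalMultilinearSeries ℝ (E₁ × E₂) G) :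
    FormalMultilinearSeries ℝ (E₁ × E₂) G :=
  fun n => ∫ t in (0:ℝ)..1, (p n).compContinuousLinearMap fun _ => scaleFst t

variable (p : FormalMultilinearSeries ℝ (E₁ × E₂) G)

lemma fstSegmentIntegral_apply_diag (n : ℕ) (y : E₁ × E₂) :
    p.fstSegmentIntegral n (fun _ => y) = ∫ t in (0:ℝ)..1, p n fun _ => (t • y.1, y.2) := by
  rw [fstSegmentIntegral, intervalIntegral.integral_of_le zero_le_one,
    intervalIntegral.integral_of_le zero_le_one, ContinuousMultilinearMap.integral_apply]
  · simp
  · exact ((p n).continuous_compContinuousLinearMap_scaleFst.integrableOn_Icc).mono_set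
      Ioc_subset_Icc_self

lemma norm_fstSegmentIntegral_le (n : ℕ) : ‖p.fstSegmentIntegral n‖ ≤ ‖p n‖ := by
  have hbound : ∀ t ∈ uIoc (0:ℝ) 1, ‖(p n).compContinuousLinearMap fun _ =>
      (scaleFst t : E₁ × E₂ →L[ℝ] E₁ × E₂)‖ ≤ ‖p n‖ := fun t ht => by
    rw [uIoc_of_le zero_le_one] at ht
    have ht1 : |t| ≤ 1 := abs_le.2 ⟨by linarith [ht.1], ht.2⟩
    calc _ ≤ ‖p n‖ * ∏ _i : Fin n, ‖(scaleFst t : E₁ × E₂ →L[ℝ] E₁ × E₂)‖ :=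
          ContinuousMultilinearMap.norm_compContinuousLinearMap_le _ _
      _ ≤ ‖p n‖ := mul_le_of_le_one_right (norm_nonneg _)
          (Finset.prod_le_one (fun _ _ => norm_nonneg _) fun _ _ => norm_scaleFst_le ht1)
  simpa [fstSegmentIntegral] using intervalIntegral.norm_integral_le_of_norm_le_const hbound

lemma radius_le_radius_fstSegmentIntegral : p.radius ≤ p.fstSegmentIntegral.radius := by
  refine ENNReal.le_of_forall_nnreal_lt fun r hr => ?_
  obtain ⟨C, -, hC⟩ := p.norm_mul_pow_le_of_lt_radius hr
  exact p.fstSegmentIntegral.le_radius_of_bound C fun n =>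
    (mul_le_mul_of_nonneg_right (p.norm_fstSegmentIntegral_le n) (by positivity)).trans (hC n)

end FormalMultilinearSeries

theorem HasFPowerSeriesOnBall.fstSegmentIntegral [CompleteSpace G] {F : E₁ × E₂ → G}
    {p : FormalMultilinearSeries ℝ (E₁ × E₂) G} {x : E₁ × E₂} {r : ℝ≥0∞}
    (hF : HasFPowerSeriesOnBall F p x r) :
    HasFPowerSeriesOnBall (fun z => ∫ t in (0:ℝ)..1, F (x.1 + t • (z.1 - x.1), z.2))
      p.fstSegmentIntegral x r where
  r_le := hF.r_le.trans p.radius_le_radius_fstSegmentIntegral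
  r_pos := hF.r_pos
  hasSum {y} hy := by
    have hseg : ∀ t : ℝ, (x.1 + t • ((x + y).1 - x.1), (x + y).2) = x + (t • y.1, y.2) := by
      intro t; ext <;> simp
    have hle : ∀ t ∈ uIoc (0:ℝ) 1, ‖((t • y.1, y.2) : E₁ × E₂)‖ ≤ ‖y‖ := fun t ht => by
      rw [uIoc_of_le zero_le_one] at ht
      exact Prod.norm_smul_fst_le (abs_le.2 ⟨by linarith [ht.1], ht.2⟩) y
    simp_rw [p.fstSegmentIntegral_apply_diag, hseg]
    refine intervalIntegral.hasSum_integral_of_dominated_convergence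
      (fun n _ => ‖p n‖ * ‖y‖ ^ n) (fun n => ?_) (fun n => ?_) ?_ intervalIntegrable_const ?_
    · exact ((p n).cont.comp (continuous_pi fun _ =>
        (continuous_id.smul continuous_const).prodMk continuous_const)).aestronglyMeasurable
    · exact Eventually.of_forall fun t ht => (p n).le_opNorm_mul_pow_of_le (pi_norm_le_iff_of_nonneg
        (norm_nonneg y) |>.2 fun _ => hle t ht)
    · refine Eventually.of_forall fun _ _ => ?_
      have hyr : (‖y‖₊ : ℝ≥0∞) < p.radius := (mem_eball_zero_iff.1 hy).trans_le hF.r_le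
      simpa using p.summable_norm_mul_pow hyr
    · refine Eventually.of_forall fun t ht => hF.hasSum ?_
      exact mem_eball_zero_iff.2
        ((enorm_le_iff_norm_le.2 (hle t ht)).trans_lt (mem_eball_zero_iff.1 hy))

theorem AnalyticAt.fstSegmentIntegral [CompleteSpace G] {F : E₁ × E₂ → G} {x : E₁ × E₂}
    (hF : AnalyticAt ℝ F x) :
    AnalyticAt ℝ (fun z => ∫ t in (0:ℝ)..1, F (x.1 + t • (z.1 - x.1), z.2)) x :=
  let ⟨_, _, hp⟩ := hF
  hp.fstSegmentIntegral.analyticAt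

end SegmentIntegral

section Slices

variable {𝕜 E G : Type*} [NontriviallyNormedField 𝕜] [NormedAddCommGroup E] [NormedSpace 𝕜 E]
  [NormedAddCommGroup G] [NormedSpace 𝕜 G]

lemma DifferentiableAt.hasDerivAt_slice_fst {f : 𝕜 × E → G} {s : 𝕜} {c : E}
    (hf : DifferentiableAt 𝕜 f (s, c)) :
    HasDerivAt (fun s' => f (s', c)) (fderiv 𝕜 f (s, c) (1, 0)) s :=
  hf.hasFDerivAt.comp_hasDerivAt s ((hasDerivAt_id s).prodMk (hasDerivAt_const s c))

lemma DifferentiableAt.hasDerivAt_slice_snd {f : E × 𝕜 → G} {x : E} {y : 𝕜}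
    (hf : DifferentiableAt 𝕜 f (x, y)) :
    HasDerivAt (fun y' => f (x, y')) (fderiv 𝕜 f (x, y) (0, 1)) y :=
  hf.hasFDerivAt.comp_hasDerivAt y ((hasDerivAt_const y x).prodMk (hasDerivAt_id y))

end Slices

section PartialDeriv

variable {E G : Type*} [NormedAddCommGroup E] [NormedSpace ℝ E]
  [NormedAddCommGroup G] [NormedSpace ℝ G]

lemma AnalyticOnNhd.deriv_fst {f : ℝ × E → G} {U : Set (ℝ × E)} (hf : AnalyticOnNhd ℝ f U)
    (hU : IsOpen U) : AnalyticOnNhd ℝ (fun p => deriv (fun s => f (s, p.2)) p.1) U := by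
  refine AnalyticOnNhd.congr (f := fun p => fderiv ℝ f p (1, 0)) hU (fun p hp => ?_)
    fun p hp => ?_
  · exact ((ContinuousLinearMap.apply ℝ G ((1:ℝ), (0:E))).analyticAt _).comp
      (hf.fderiv_of_isOpen hU p hp)
  · exact ((hf p hp).differentiableAt.hasDerivAt_slice_fst).deriv.symm

theorem exists_analyticAt_eq_sub_smul [CompleteSpace G] {f : ℝ × E → G} {a : ℝ} {b : E} {ε : ℝ}
    (hf : AnalyticOnNhd ℝ f (ball (a, b) ε)) (h0 : ∀ c, (a, c) ∈ ball (a, b) ε → f (a, c) = 0) :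
    ∃ Ψ : ℝ × E → G,
      (∀ c, (a, c) ∈ ball (a, b) ε →
        AnalyticAt ℝ Ψ (a, c) ∧ Ψ (a, c) = deriv (fun s => f (s, c)) a) ∧
      ∀ p ∈ ball (a, b) ε, f p = (p.1 - a) • Ψ p := by
  set fs : ℝ × E → G := fun p => deriv (fun s => f (s, p.2)) p.1
  have hfs : AnalyticOnNhd ℝ fs (ball (a, b) ε) := hf.deriv_fst isOpen_ball
  refine ⟨fun z => ∫ t in (0:ℝ)..1, fs (a + t • (z.1 - a), z.2),
    fun c hc => ⟨(hfs _ hc).fstSegmentIntegral, by simp [fs]⟩, ?_⟩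
  rintro ⟨s, c⟩ hp
  have hac : (a, c) ∈ ball (a, b) ε := by
    simp only [mem_ball, Prod.dist_eq, dist_self] at hp ⊢
    exact (max_le_max dist_nonneg le_rfl).trans_lt hp
  have hseg : ∀ t ∈ uIcc (0:ℝ) 1, (a + t • (s - a), c) ∈ ball (a, b) ε := fun t ht => by
    rw [uIcc_of_le zero_le_one] at ht
    simpa using (convex_ball _ _).add_smul_sub_mem hac hp ht
  have hderiv : ∀ t ∈ uIcc (0:ℝ) 1, HasDerivAt (fun t : ℝ => f (a + t • (s - a), c))
      ((s - a) • fs (a + t • (s - a), c)) t := fun t ht => by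
    have hline : HasDerivAt (fun t : ℝ => a + t • (s - a)) (s - a) t := by
      simpa using ((hasDerivAt_id t).smul_const (s - a)).const_add a
    exact (hf _ (hseg t ht)).differentiableAt.hasDerivAt_slice_fst.differentiableAt.hasDerivAt.scomp
      t hline
  have hcont : ContinuousOn (fun t : ℝ => (s - a) • fs (a + t • (s - a), c)) (uIcc 0 1) :=
    continuousOn_const.smul (hfs.continuousOn.comp (by fun_prop) hseg)
  have hFTC := intervalIntegral.integral_eq_sub_of_hasDerivAt hderiv hcont.intervalIntegrable
  simp only [intervalIntegral.integral_smul, one_smul, zero_smul, add_sub_cancel, add_zero,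
    h0 c hac, sub_zero] at hFTC
  exact hFTC.symm

end PartialDeriv

theorem deriv_deriv_eq_two_smul_deriv {𝕜 G : Type*} [NontriviallyNormedField 𝕜]
    [NormedAddCommGroup G] [NormedSpace 𝕜 G] [CompleteSpace G] {n ψ : 𝕜 → G} {a : 𝕜}
    (hψ : AnalyticAt 𝕜 ψ a) (hn : n =ᶠ[𝓝 a] fun s => (s - a) • ψ s) :
    deriv (deriv n) a = (2 : 𝕜) • deriv ψ a := by
  have hprod : ∀ (φ : 𝕜 → G) s, DifferentiableAt 𝕜 φ s →
      HasDerivAt (fun s => (s - a) • φ s) ((s - a) • deriv φ s + (1 : 𝕜) • φ s) s :=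
    fun _ s hs => ((hasDerivAt_id s).sub_const a).smul hs.hasDerivAt
  have hn' : deriv n =ᶠ[𝓝 a] fun s => (s - a) • deriv ψ s + ψ s := by
    filter_upwards [hn.eventuallyEq_nhds, hψ.eventually_analyticAt] with s hs hψs
    rw [hs.deriv_eq, (hprod ψ s hψs.differentiableAt).deriv, one_smul]
  have h2 : HasDerivAt (fun s => (s - a) • deriv ψ s + ψ s)
      ((a - a) • deriv (deriv ψ) a + (1 : 𝕜) • deriv ψ a + deriv ψ a) a :=
    (hprod _ a hψ.deriv.differentiableAt).add hψ.differentiableAt.hasDerivAt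
  rw [hn'.deriv_eq, h2.deriv, sub_self, zero_smul, zero_add, one_smul, two_smul]

lemma hasDerivAt_sub_mul_deriv {𝕜 : Type*} [NontriviallyNormedField 𝕜] {u : 𝕜 → 𝕜} {s w : 𝕜}
    (hu : DifferentiableAt 𝕜 u s) (hu' : HasDerivAt (deriv u) w s) :
    HasDerivAt (fun x => u x - x * deriv u x) (-(s * w)) s :=
  (hu.hasDerivAt.sub ((hasDerivAt_id s).mul hu')).congr_deriv (by simp)

lemma eq_of_eq_div_sub_of_continuousAt {Φ : ℝ → ℝ → ℝ} {N Ψ : ℝ × ℝ → ℝ} {U : Set (ℝ × ℝ)}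
    {a : ℝ} (hU : IsOpen U) (hΦ : ∀ s c, (s, c) ∈ U → s ≠ a → Φ s c = N (s, c) / (s - a))
    (hN : ∀ p ∈ U, N p = (p.1 - a) * Ψ p) (hΦc : ∀ c, (a, c) ∈ U → ContinuousAt (fun s => Φ s c) a)
    (hΨc : ∀ c, (a, c) ∈ U → ContinuousAt Ψ (a, c)) {s c : ℝ} (hsc : (s, c) ∈ U) :
    Φ s c = Ψ (s, c) := by
  have hoff : ∀ s, (s, c) ∈ U → s ≠ a → Φ s c = Ψ (s, c) := fun s hs hsa => by
    rw [hΦ s c hs hsa, hN _ hs, mul_div_cancel_left₀ _ (sub_ne_zero.2 hsa)]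
  rcases eq_or_ne s a with rfl | hsa
  · have hslice : ContinuousAt (fun s' : ℝ => (s', c)) s := by fun_prop
    have hne : (fun s' => Φ s' c) =ᶠ[𝓝[≠] s] fun s' => Ψ (s', c) := by
      filter_upwards [nhdsWithin_le_nhds (hslice.preimage_mem_nhds (hU.mem_nhds hsc)),
        self_mem_nhdsWithin] with s' hs' hne using hoff s' hs' hne
    exact ((hΦc c hsc).eventuallyEq_nhds_iff_eventuallyEq_nhdsNE
      ((hΨc c hsc).comp (f := fun s' => (s', c)) hslice)).1 hne |>.eq_of_nhds
  · exact hoff s hsc hsa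

theorem deriv_eq_neg_div_of_eventually_apply_eq {𝕜 : Type*} [NontriviallyNormedField 𝕜]
    {f : 𝕜 × 𝕜 → 𝕜} {H : 𝕜 → 𝕜} {y a b : 𝕜}
    (hf : DifferentiableAt 𝕜 f (H y, y)) (hH : DifferentiableAt 𝕜 H y)
    (ha : HasDerivAt (fun s => f (s, y)) a (H y)) (hb : HasDerivAt (fun c => f (H y, c)) b y)
    (ha0 : a ≠ 0) (hconst : ∀ᶠ c in 𝓝 y, f (H c, c) = f (H y, y)) :
    deriv H y = -b / a := by
  have hcomp : HasDerivAt (fun c => f (H c, c)) (fderiv 𝕜 f (H y, y) (deriv H y, 1)) y :=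
    hf.hasFDerivAt.comp_hasDerivAt (f := fun c => (H c, c)) y
      (hH.hasDerivAt.prodMk (hasDerivAt_id y))
  have hsplit : fderiv 𝕜 f (H y, y) (deriv H y, 1) = deriv H y * a + b := by
    rw [ha.unique hf.hasDerivAt_slice_fst, hb.unique hf.hasDerivAt_slice_snd, ← smul_eq_mul,
      ← map_smul, ← map_add]
    simp
  have hzero := hcomp.unique ((hasDerivAt_const y _).congr_of_eventuallyEq hconst)
  rw [hsplit] at hzero
  field_simp
  linear_combination hzero

section Implicit

variable {𝕜 : Type*} [RCLike 𝕜]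

lemma ContinuousLinearMap.isInvertible_of_apply_one_ne_zero {L : 𝕜 →L[𝕜] 𝕜} (h : L 1 ≠ 0) :
    L.IsInvertible :=
  ⟨ContinuousLinearEquiv.unitsEquivAut 𝕜 (Units.mk0 _ h), ContinuousLinearMap.ext_ring (by simp)⟩

theorem AnalyticAt.exists_implicitFunction_fst {f : 𝕜 × 𝕜 → 𝕜} {x y a b : 𝕜}
    (hf : AnalyticAt 𝕜 f (x, y)) (ha : HasDerivAt (fun s => f (s, y)) a x)
    (hb : HasDerivAt (fun c => f (x, c)) b y) (ha0 : a ≠ 0) :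
    ∃ H : 𝕜 → 𝕜, AnalyticAt 𝕜 H y ∧ H y = x ∧ deriv H y = -b / a ∧
      ∀ᶠ c in 𝓝 y, f (H c, c) = f (x, y) := by
  have cdf : ContDiffAt 𝕜 ω (f ∘ Prod.swap) (y, x) :=
    (hf.comp_of_eq (analyticAt_snd.prod analyticAt_fst) rfl).contDiffAt
  have hω : (ω : WithTop ℕ∞) ≠ 0 := by simp
  have if₂ : (fderiv 𝕜 (f ∘ Prod.swap) (y, x) ∘L .inr 𝕜 𝕜 𝕜).IsInvertible := by
    refine ContinuousLinearMap.isInvertible_of_apply_one_ne_zero ?_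
    have := cdf.differentiableAt hω |>.hasDerivAt_slice_snd
    rwa [ha.unique this] at ha0
  set H := cdf.implicitFunction hω if₂
  have hHan : AnalyticAt 𝕜 H y := (cdf.contDiffAt_implicitFunction hω if₂).analyticAt
  have hHy : H y = x := cdf.implicitFunction_apply_self hω if₂
  have hH : ∀ᶠ c in 𝓝 y, f (H c, c) = f (x, y) := cdf.eventually_apply_implicitFunction hω if₂
  refine ⟨H, hHan, hHy, ?_, hH⟩
  clear_value H
  subst hHy
  exact deriv_eq_neg_div_of_eventually_apply_eq hf.differentiableAt hHan.differentiableAt ha hb ha0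
    hH

end Implicit

/-- The right-hand side `F(s, u, v, c)` of the shadow-price ODE `g'' = F(s, g, g', c)`. -/
noncomputable def shadowPriceRHS (θ δ σ s u v c : ℝ) : ℝ :=
  2 * v ^ 2 / (c + u) - 2 * θ * v / s + 2 * δ / σ ^ 2 * (1 + u / c) * (u / s ^ 2 - v / s)

section ShadowPrice

variable {θ δ σ c : ℝ}

lemma shadowPriceRHS_one_one_one : shadowPriceRHS θ δ σ 1 1 1 c = 2 / (c + 1) - 2 * θ := by
  simp [shadowPriceRHS]

lemma hasDerivAt_shadowPriceRHS {u v : ℝ → ℝ} (hu : HasDerivAt u 1 1) (hv : HasDerivAt v 0 1)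
    (hu1 : u 1 = 1) (hv1 : v 1 = 1) (hc : c + 1 ≠ 0) :
    HasDerivAt (fun s => shadowPriceRHS θ δ σ s (u s) (v s) c) (2 * θ - 2 / (c + 1) ^ 2) 1 := by
  have hcu : c + u 1 ≠ 0 := by rwa [hu1]
  have h := (((hv.pow 2).const_mul 2).div (hu.const_add c) hcu).sub
    ((hv.const_mul (2 * θ)).div (hasDerivAt_id 1) one_ne_zero) |>.add
    ((((hu.div_const c).const_add 1).const_mul (2 * δ / σ ^ 2)).mul
      ((hu.div (hasDerivAt_pow 2 1) (by norm_num)).sub (hv.div (hasDerivAt_id 1) one_ne_zero)))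
  refine (show HasDerivAt (fun s => shadowPriceRHS θ δ σ s (u s) (v s) c) _ 1 from h).congr_deriv ?_
  simp only [Pi.sub_apply, Pi.div_apply, Pi.pow_apply, id, hu1, hv1]
  field_simp
  ring

lemma deriv_sub_mul_deriv_eq_of_shadowPrice {u : ℝ → ℝ} (hu : AnalyticAt ℝ u 1)
    (hode : deriv (deriv u) 1 = shadowPriceRHS θ δ σ 1 (u 1) (deriv u 1) c)
    (hu1 : u 1 = 1) (hu'1 : deriv u 1 = 1) :
    deriv (fun s => u s - s * deriv u s) 1 = 2 * θ - 2 / (c + 1) := by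
  rw [(hasDerivAt_sub_mul_deriv hu.differentiableAt
    hu.deriv.differentiableAt.hasDerivAt).deriv, hode, hu1, hu'1, shadowPriceRHS_one_one_one]
  ring

theorem deriv_eq_of_sub_mul_deriv_eq_sub_mul {u ψ : ℝ → ℝ} (hθ : θ ≠ 0) (hc : c + 1 = θ⁻¹)
    (hu : AnalyticAt ℝ u 1)
    (hode : ∀ᶠ s in 𝓝 1, deriv (deriv u) s = shadowPriceRHS θ δ σ s (u s) (deriv u s) c)
    (hu1 : u 1 = 1) (hu'1 : deriv u 1 = 1) (hψ : AnalyticAt ℝ ψ 1)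
    (hfac : (fun s => u s - s * deriv u s) =ᶠ[𝓝 1] fun s => (s - 1) * ψ s) :
    deriv ψ 1 = θ * (θ - 1) := by
  have hu''1 : deriv (deriv u) 1 = 0 := by
    rw [hode.self_of_nhds, hu1, hu'1, shadowPriceRHS_one_one_one, hc]
    field_simp
    ring
  have hu''' : HasDerivAt (deriv (deriv u)) (2 * θ - 2 * θ ^ 2) 1 := by
    have h := hasDerivAt_shadowPriceRHS (θ := θ) (δ := δ) (σ := σ)
      (hu.differentiableAt.hasDerivAt.congr_deriv hu'1)
      (hu.deriv.differentiableAt.hasDerivAt.congr_deriv hu''1)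
      hu1 hu'1 (hc ▸ inv_ne_zero hθ)
    refine (h.congr_of_eventuallyEq hode).congr_deriv ?_
    rw [hc]
    field_simp
  have hn' : deriv (fun s => u s - s * deriv u s) =ᶠ[𝓝 1] fun s => -(s * deriv (deriv u) s) := by
    filter_upwards [hu.eventually_analyticAt] with s hs
    exact (hasDerivAt_sub_mul_deriv hs.differentiableAt
      hs.deriv.differentiableAt.hasDerivAt).deriv
  have hn'' : HasDerivAt (fun s => -(s * deriv (deriv u) s))
      (-(1 * deriv (deriv u) 1 + 1 * (2 * θ - 2 * θ ^ 2))) 1 :=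
    ((hasDerivAt_id 1).mul hu''').neg
  have h2 := deriv_deriv_eq_two_smul_deriv hψ hfac
  rw [hn'.deriv_eq, hn''.deriv, hu''1, smul_eq_mul] at h2
  linear_combination -h2 / 2

theorem shadowPrice_quotient_at_one {g Ψ : ℝ × ℝ → ℝ} {cbar ε : ℝ} (hθ : θ ≠ 0)
    (hcbar : cbar + 1 = θ⁻¹) (hε : 0 < ε) (hg : AnalyticOnNhd ℝ g (ball ((1:ℝ), cbar) ε))
    (hode : ∀ p ∈ ball ((1:ℝ), cbar) ε, deriv (deriv fun s => g (s, p.2)) p.1 =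
      shadowPriceRHS θ δ σ p.1 (g p) (deriv (fun s => g (s, p.2)) p.1) p.2)
    (hinit : ∀ c, ((1:ℝ), c) ∈ ball ((1:ℝ), cbar) ε →
      g (1, c) = 1 ∧ deriv (fun s => g (s, c)) 1 = 1)
    (hΨ : AnalyticAt ℝ Ψ (1, cbar))
    (hΨ1 : ∀ c, ((1:ℝ), c) ∈ ball ((1:ℝ), cbar) ε →
      Ψ (1, c) = deriv (fun s => g (s, c) - s * deriv (fun s' => g (s', c)) s) 1)
    (hgΨ : ∀ p ∈ ball ((1:ℝ), cbar) ε,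
      g p - p.1 * deriv (fun s => g (s, p.2)) p.1 = (p.1 - 1) * Ψ p) :
    Ψ (1, cbar) = 0 ∧ HasDerivAt (fun s => Ψ (s, cbar)) (θ * (θ - 1)) 1 ∧
      HasDerivAt (fun c => Ψ (1, c)) (2 * θ ^ 2) cbar := by
  have hB : ball ((1:ℝ), cbar) ε ∈ 𝓝 (1, cbar) := isOpen_ball.mem_nhds (mem_ball_self hε)
  have hs : ∀ᶠ s in 𝓝 1, (s, cbar) ∈ ball ((1:ℝ), cbar) ε :=
    (Continuous.prodMk_left cbar).continuousAt.preimage_mem_nhds hB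
  have hc : ∀ᶠ c in 𝓝 cbar, ((1:ℝ), c) ∈ ball ((1:ℝ), cbar) ε :=
    (Continuous.prodMk_right 1).continuousAt.preimage_mem_nhds hB
  have hΨ1c : ∀ᶠ c in 𝓝 cbar, Ψ (1, c) = 2 * θ - 2 / (c + 1) :=
    hc.mono fun c hc => (hΨ1 c hc).trans (deriv_sub_mul_deriv_eq_of_shadowPrice
      ((hg _ hc).comp₂ analyticAt_id analyticAt_const) (hode _ hc) (hinit c hc).1 (hinit c hc).2)
  have hψ : AnalyticAt ℝ (fun s => Ψ (s, cbar)) 1 := hΨ.comp₂ analyticAt_id analyticAt_const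
  refine ⟨?_, ?_, ?_⟩
  · rw [hΨ1c.self_of_nhds, hcbar]
    field_simp
    ring
  · rw [← deriv_eq_of_sub_mul_deriv_eq_sub_mul hθ hcbar
      ((hg _ (mem_ball_self hε)).comp₂ analyticAt_id analyticAt_const)
      (hs.mono fun s hs => hode (s, cbar) hs) (hinit cbar (mem_ball_self hε)).1
      (hinit cbar (mem_ball_self hε)).2 hψ (hs.mono fun s hs => hgΨ (s, cbar) hs)]
    exact hψ.differentiableAt.hasDerivAt
  · have h := (hasDerivAt_const cbar (2 * θ)).sub ((hasDerivAt_const cbar (2:ℝ)).div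
      ((hasDerivAt_id cbar).add_const 1) (by simp [hcbar, hθ]))
    refine (h.congr_of_eventuallyEq hΨ1c).congr_deriv ?_
    simp only [id, hcbar]
    field_simp
    ring

end ShadowPrice

theorem free_boundary_implicit_function_general
    (θ δ σ : ℝ) (hθ : θ ∈ Ioo (0:ℝ) 1)
    (cbar : ℝ) (hcbar : cbar = (1 - θ) / θ)
    (ε : ℝ) (hε : 0 < ε)
    (g : ℝ × ℝ → ℝ) (hg : AnalyticOnNhd ℝ g (ball ((1:ℝ), cbar) ε))
    (hode : ∀ p ∈ ball ((1:ℝ), cbar) ε,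
      deriv (deriv (fun s => g (s, p.2))) p.1
        = 2 * (deriv (fun s => g (s, p.2)) p.1) ^ 2 / (p.2 + g p)
          - 2 * θ * deriv (fun s => g (s, p.2)) p.1 / p.1
          + 2 * δ / σ ^ 2 * (1 + g p / p.2)
              * (g p / p.1 ^ 2 - deriv (fun s => g (s, p.2)) p.1 / p.1))
    (hinit : ∀ c : ℝ, ((1:ℝ), c) ∈ ball ((1:ℝ), cbar) ε →
      g (1, c) = 1 ∧ deriv (fun s => g (s, c)) 1 = 1)
    (Φ : ℝ → ℝ → ℝ)
    (hΦ : ∀ s c : ℝ, (s, c) ∈ ball ((1:ℝ), cbar) ε → s ≠ 1 →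
      Φ s c = (g (s, c) - s * deriv (fun s' => g (s', c)) s) / (s - 1))
    (hΦcont : ∀ c : ℝ, ((1:ℝ), c) ∈ ball ((1:ℝ), cbar) ε →
      ContinuousAt (fun s => Φ s c) 1) :
    Φ 1 cbar = 0 ∧
    deriv (fun s => Φ s cbar) 1 = θ * (θ - 1) ∧ θ * (θ - 1) ≠ 0 ∧
    ∃ H : ℝ → ℝ, AnalyticAt ℝ H cbar ∧ H cbar = 1 ∧
      deriv H cbar = 2 * θ / (1 - θ) ∧
      ∀ᶠ c in nhds cbar, Φ (H c) c = 0 := by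
  obtain ⟨hθ0, hθ1⟩ := hθ
  have hcbar1 : cbar + 1 = θ⁻¹ := by rw [hcbar]; field_simp; ring
  have hx₀ : ((1:ℝ), cbar) ∈ ball ((1:ℝ), cbar) ε := mem_ball_self hε
  obtain ⟨Ψ, hΨ1, hgΨ⟩ := exists_analyticAt_eq_sub_smul
    (hg.sub (analyticOnNhd_fst.mul (hg.deriv_fst isOpen_ball)))
    fun c hc => by simp [(hinit c hc).1, (hinit c hc).2]
  have hΦΨ : ∀ s c, (s, c) ∈ ball ((1:ℝ), cbar) ε → Φ s c = Ψ (s, c) := fun s c hsc =>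
    eq_of_eq_div_sub_of_continuousAt isOpen_ball hΦ hgΨ hΦcont
      (fun c hc => (hΨ1 c hc).1.continuousAt) hsc
  obtain ⟨hΨ0, hΨs, hΨc⟩ := shadowPrice_quotient_at_one hθ0.ne' hcbar1 hε hg hode hinit
    (hΨ1 cbar hx₀).1 (fun c hc => (hΨ1 c hc).2) hgΨ
  have hθθ : θ * (θ - 1) ≠ 0 := mul_ne_zero hθ0.ne' (by linarith)
  obtain ⟨H, hHan, hH1, hH', hΨH⟩ := (hΨ1 cbar hx₀).1.exists_implicitFunction_fst hΨs hΨc hθθ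
  refine ⟨by rw [hΦΨ 1 cbar hx₀, hΨ0], ?_, hθθ, H, hHan, hH1, ?_, ?_⟩
  · have hΦΨ' : (fun s => Φ s cbar) =ᶠ[𝓝 1] fun s => Ψ (s, cbar) :=
      mem_of_superset ((Continuous.prodMk_left cbar).continuousAt.preimage_mem_nhds
        (isOpen_ball.mem_nhds hx₀)) fun s hs => hΦΨ s cbar hs
    rw [hΦΨ'.deriv_eq, hΨs.deriv]
  · rw [hH', div_eq_div_iff hθθ (by linarith)]
    ring
  · have hHnear : ∀ᶠ c in 𝓝 cbar, (H c, c) ∈ ball ((1:ℝ), cbar) ε :=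
      (hHan.continuousAt.prodMk continuousAt_id).preimage_mem_nhds (by
        rw [hH1]; exact isOpen_ball.mem_nhds hx₀)
    filter_upwards [hΨH, hHnear] with c h1 h2
    rw [hΦΨ _ _ h2, h1, hΨ0]

/-- The free boundary function: with `Φ(s,c) = (g(s,c) - s ∂ₛg(s,c))/(s-1)`
(extended by continuity to `s = 1`), one has `Φ(1,c̄) = 0` and
`∂ₛΦ(1,c̄) = θ(θ-1) ≠ 0`; hence the implicit function theorem yields an
analytic `H` with `H(c̄) = 1`, `H'(c̄) = 2θ/(1-θ)`, and `Φ(H(c),c) = 0` near `c̄`. -/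
theorem free_boundary_implicit_function
    (θ δ σ : ℝ) (hθ : θ ∈ Ioo (0:ℝ) 1) (hδ : 0 < δ) (hσ : 0 < σ)
    (cbar : ℝ) (hcbar : cbar = (1 - θ) / θ)
    (ε : ℝ) (hε : 0 < ε)
    (g : ℝ × ℝ → ℝ) (hg : AnalyticOnNhd ℝ g (ball ((1:ℝ), cbar) ε))
    (hode : ∀ p ∈ ball ((1:ℝ), cbar) ε,
      deriv (deriv (fun s => g (s, p.2))) p.1
        = 2 * (deriv (fun s => g (s, p.2)) p.1) ^ 2 / (p.2 + g p)
          - 2 * θ * deriv (fun s => g (s, p.2)) p.1 / p.1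
          + 2 * δ / σ ^ 2 * (1 + g p / p.2)
              * (g p / p.1 ^ 2 - deriv (fun s => g (s, p.2)) p.1 / p.1))
    (hinit : ∀ c : ℝ, ((1:ℝ), c) ∈ ball ((1:ℝ), cbar) ε →
      g (1, c) = 1 ∧ deriv (fun s => g (s, c)) 1 = 1)
    (Φ : ℝ → ℝ → ℝ)
    (hΦ : ∀ s c : ℝ, (s, c) ∈ ball ((1:ℝ), cbar) ε → s ≠ 1 →
      Φ s c = (g (s, c) - s * deriv (fun s' => g (s', c)) s) / (s - 1))
    (hΦcont : ∀ c : ℝ, ((1:ℝ), c) ∈ ball ((1:ℝ), cbar) ε →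
      ContinuousAt (fun s => Φ s c) 1) :
    Φ 1 cbar = 0 ∧
    deriv (fun s => Φ s cbar) 1 = θ * (θ - 1) ∧ θ * (θ - 1) ≠ 0 ∧
    ∃ H : ℝ → ℝ, AnalyticAt ℝ H cbar ∧ H cbar = 1 ∧
      deriv H cbar = 2 * θ / (1 - θ) ∧
      ∀ᶠ c in nhds cbar, Φ (H c) c = 0 :=
  free_boundary_implicit_function_general θ δ σ hθ cbar hcbar ε hε g hg hode hinit Φ hΦ hΦcont
end

section
/- With the same expansions of $c$ and $\bar{s}$ as for the lower boundary, one has $\frac{1}{1+c/\bar{s}}=\theta+\left(\frac{3}{4}\theta^2(1-\theta)^2\right)^{1/3}\lambda^{1/3}-\frac{\delta\theta}{6\sigma^2}\left(\frac{6}{\theta(1-\theta)}\right)^{2/3}\lambda^{2/3}+O(\lambda)$, and consequently the width of the no-trade region satisfies $\frac{1}{1+c/\bar{s}}-\frac{1}{1+c}=\left(6\theta^2(1-\theta)^2\right)^{1/3}\lambda^{1/3}+O(\lambda)$, with no $\lambda^{2/3}$ term. -/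
/-!
Write `t = λ^{1/3}`. Then `c` and `s̄` are quadratics in `t` up to `O(t³)`, and both boundaries
are quotients of such functions: `1/(1 + c/s̄) = s̄/(s̄ + c)` and `1/(1 + c)`. A quotient `p/q`
equals a quadratic `r` up to `O(t³)` as soon as the coefficients of `p` and `r q` agree up to
`t²`, and matching coefficients gives
`1/(1 + c/s̄) = θ + A t - B t² + O(t³)` and `1/(1 + c) = θ - A t - B t² + O(t³)`
with `A = θ(1-θ)γ/2`, `B = δθγ²/(6σ²)`. The `t²` terms agree, so the width is `2 A t + O(t³)`.
-/

open Set Filter Asymptotics Real Topology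

section QuadraticExpansion

variable {ι : Type*} {l : Filter ι} {u : ι → ℝ}

theorem tendsto_quadratic (hu : Tendsto u l (𝓝 0)) (a₀ a₁ a₂ : ℝ) :
    Tendsto (fun x => a₀ + a₁ * u x + a₂ * u x ^ 2) l (𝓝 a₀) := by
  simpa using (tendsto_const_nhds.add (hu.const_mul a₁)).add ((hu.pow 2).const_mul a₂)

theorem isBigO_quadratic_mul_quadratic_sub (hu : Tendsto u l (𝓝 0)) (a₀ a₁ a₂ b₀ b₁ b₂ : ℝ) :
    (fun x => (a₀ + a₁ * u x + a₂ * u x ^ 2) * (b₀ + b₁ * u x + b₂ * u x ^ 2)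
      - (a₀ * b₀ + (a₀ * b₁ + a₁ * b₀) * u x + (a₀ * b₂ + a₁ * b₁ + a₂ * b₀) * u x ^ 2))
      =O[l] fun x => u x ^ 3 := by
  have hbdd : (fun x => a₁ * b₂ + a₂ * b₁ + a₂ * b₂ * u x) =O[l] fun _ => (1 : ℝ) :=
    (tendsto_const_nhds.add (hu.const_mul _)).isBigO_one ℝ
  exact (hbdd.mul (isBigO_refl (fun x => u x ^ 3) l)).congr (fun x => by ring) fun x => one_mul _

theorem tendsto_of_isBigO_sub_quadratic {q : ι → ℝ} (hu : Tendsto u l (𝓝 0)) {b₀ b₁ b₂ : ℝ}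
    (hq : (fun x => q x - (b₀ + b₁ * u x + b₂ * u x ^ 2)) =O[l] fun x => u x ^ 3) :
    Tendsto q l (𝓝 b₀) := by
  have herr := hq.trans_tendsto (by simpa using hu.pow 3)
  simpa using herr.add (tendsto_quadratic hu b₀ b₁ b₂)

theorem Asymptotics.IsBigO.div_sub_of_sub_mul {p q r g : ι → ℝ} {L : ℝ}
    (h : (fun x => p x - r x * q x) =O[l] g) (hq : Tendsto q l (𝓝 L)) (hL : L ≠ 0) :
    (fun x => p x / q x - r x) =O[l] g := by
  refine (h.mul ((hq.inv₀ hL).isBigO_one ℝ)).congr' ?_ (by simp)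
  filter_upwards [hq.eventually_ne hL] with x hx
  field_simp

theorem isBigO_div_sub_quadratic {p q : ι → ℝ} (hu : Tendsto u l (𝓝 0))
    {a₀ a₁ a₂ b₀ b₁ b₂ c₀ c₁ c₂ : ℝ} (hb₀ : b₀ ≠ 0)
    (hp : (fun x => p x - (c₀ + c₁ * u x + c₂ * u x ^ 2)) =O[l] fun x => u x ^ 3)
    (hq : (fun x => q x - (b₀ + b₁ * u x + b₂ * u x ^ 2)) =O[l] fun x => u x ^ 3)
    (h₀ : c₀ = a₀ * b₀) (h₁ : c₁ = a₀ * b₁ + a₁ * b₀) (h₂ : c₂ = a₀ * b₂ + a₁ * b₁ + a₂ * b₀) :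
    (fun x => p x / q x - (a₀ + a₁ * u x + a₂ * u x ^ 2)) =O[l] fun x => u x ^ 3 := by
  subst h₀ h₁ h₂
  have hr : (fun x => a₀ + a₁ * u x + a₂ * u x ^ 2) =O[l] fun _ => (1 : ℝ) :=
    (tendsto_quadratic hu a₀ a₁ a₂).isBigO_one ℝ
  have hnum := (hp.sub ((hr.mul hq).congr_right fun x => one_mul _)).sub
    (isBigO_quadratic_mul_quadratic_sub hu a₀ a₁ a₂ b₀ b₁ b₂)
  exact (hnum.congr_left fun x => by ring).div_sub_of_sub_mul
    (tendsto_of_isBigO_sub_quadratic hu hq) hb₀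

end QuadraticExpansion

section OneThird

variable {x : ℝ}

theorem rpow_one_third_pow_three (hx : 0 ≤ x) : (x ^ ((1:ℝ)/3)) ^ 3 = x := by
  simpa using rpow_inv_natCast_pow hx (n := 3) (by norm_num)

theorem rpow_two_thirds (hx : 0 ≤ x) : x ^ ((2:ℝ)/3) = (x ^ ((1:ℝ)/3)) ^ 2 := by
  rw [← rpow_natCast, ← rpow_mul hx]
  norm_num

theorem rpow_one_third_pow_three_mul {y : ℝ} (hx : 0 ≤ x) (hy : 0 ≤ y) :
    (x ^ 3 * y) ^ ((1:ℝ)/3) = x * y ^ ((1:ℝ)/3) := by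
  rw [mul_rpow (by positivity) hy]
  congr 1
  simpa using pow_rpow_inv_natCast hx (n := 3) (by norm_num)

theorem tendsto_rpow_one_third_nhdsGT_zero :
    Tendsto (fun x : ℝ => x ^ ((1:ℝ)/3)) (𝓝[>] 0) (𝓝 0) := by
  simpa using (continuousAt_rpow_const 0 ((1:ℝ)/3) (by norm_num)).tendsto.mono_left
    nhdsWithin_le_nhds

theorem isBigO_sub_rpow_thirds_iff {f : ℝ → ℝ} (a₀ a₁ a₂ : ℝ) :
    ((fun x => f x - (a₀ + a₁ * x ^ ((1:ℝ)/3) + a₂ * x ^ ((2:ℝ)/3))) =O[𝓝[>] 0] fun x => x) ↔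
      (fun x => f x - (a₀ + a₁ * x ^ ((1:ℝ)/3) + a₂ * (x ^ ((1:ℝ)/3)) ^ 2)) =O[𝓝[>] 0]
        fun x => (x ^ ((1:ℝ)/3)) ^ 3 := by
  have hpos : ∀ᶠ x in 𝓝[>] (0:ℝ), 0 < x := self_mem_nhdsWithin
  refine isBigO_congr (hpos.mono fun x hx => ?_) (hpos.mono fun x hx => ?_)
  · simp only [rpow_two_thirds hx.le]
  · exact (rpow_one_third_pow_three hx.le).symm

end OneThird

section NoTradeBoundaries

variable {ι : Type*} {l : Filter ι} {u c s : ι → ℝ} {θ δ σ cbar α β γ : ℝ}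

theorem one_add_one_sub_div_self_ne_zero (hθ : θ ≠ 0) : 1 + (1 - θ) / θ ≠ 0 := by
  rw [one_add_div hθ, add_sub_cancel]
  exact one_div_ne_zero hθ

theorem lower_boundary_expansion (hθ : θ ≠ 0) (hcbar : cbar = (1 - θ) / θ)
    (hα : α = (1 - θ) / (2 * θ) * γ)
    (hβ : β = (2 * δ / σ ^ 2 + 3 * (1 - θ) ^ 2) / (12 * θ) * γ ^ 2)
    (hu : Tendsto u l (𝓝 0))
    (hc : (fun x => c x - (cbar + α * u x + β * u x ^ 2)) =O[l] fun x => u x ^ 3) :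
    (fun x => 1 / (1 + c x) - (θ + -(θ * (1 - θ) / 2 * γ) * u x
      + -(δ * θ / (6 * σ ^ 2) * γ ^ 2) * u x ^ 2)) =O[l] fun x => u x ^ 3 := by
  refine isBigO_div_sub_quadratic hu (c₀ := 1) (c₁ := 0) (c₂ := 0) (b₀ := 1 + cbar) (b₁ := α)
    (b₂ := β) (hcbar ▸ one_add_one_sub_div_self_ne_zero hθ)
    ((isBigO_zero _ _).congr_left fun x => by ring) (hc.congr_left fun x => by ring) ?_ ?_ ?_ <;>
  subst hcbar hα hβ <;> field_simp <;> ring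

theorem upper_boundary_expansion (hθ : θ ≠ 0) (hcbar : cbar = (1 - θ) / θ)
    (hα : α = (1 - θ) / (2 * θ) * γ)
    (hβ : β = (2 * δ / σ ^ 2 + 3 * (1 - θ) ^ 2) / (12 * θ) * γ ^ 2)
    (hu : Tendsto u l (𝓝 0))
    (hc : (fun x => c x - (cbar + α * u x + β * u x ^ 2)) =O[l] fun x => u x ^ 3)
    (hs : (fun x => s x - (1 + γ * u x + γ ^ 2 / 2 * u x ^ 2)) =O[l] fun x => u x ^ 3) :
    (fun x => s x / (s x + c x) - (θ + θ * (1 - θ) / 2 * γ * u x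
      + -(δ * θ / (6 * σ ^ 2) * γ ^ 2) * u x ^ 2)) =O[l] fun x => u x ^ 3 := by
  refine isBigO_div_sub_quadratic hu (b₀ := 1 + cbar) (b₁ := γ + α) (b₂ := γ ^ 2 / 2 + β)
    (hcbar ▸ one_add_one_sub_div_self_ne_zero hθ) hs ((hs.add hc).congr_left fun x => by ring)
    ?_ ?_ ?_ <;>
  subst hcbar hα hβ <;> field_simp <;> ring

end NoTradeBoundaries

theorem upper_boundary_and_width_expansion_general
    (θ δ σ cbar α β γ : ℝ) (hθ : θ ∈ Ioo (0:ℝ) 1)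
    (hcbar : cbar = (1 - θ) / θ)
    (hγ : γ = (6 / (θ * (1 - θ))) ^ ((1:ℝ)/3))
    (hα : α = (1 - θ) / (2 * θ) * γ)
    (hβ : β = (2 * δ / σ ^ 2 + 3 * (1 - θ) ^ 2) / (12 * θ) * γ ^ 2)
    (c sbar : ℝ → ℝ)
    (hc : (fun lam : ℝ => c lam
        - (cbar + α * lam ^ ((1:ℝ)/3) + β * lam ^ ((2:ℝ)/3)))
      =O[nhdsWithin 0 (Ioi 0)] (fun lam : ℝ => lam))
    (hs : (fun lam : ℝ => sbar lam
        - (1 + γ * lam ^ ((1:ℝ)/3) + γ ^ 2 / 2 * lam ^ ((2:ℝ)/3)))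
      =O[nhdsWithin 0 (Ioi 0)] (fun lam : ℝ => lam)) :
    ((fun lam : ℝ => 1 / (1 + c lam / sbar lam)
        - (θ + (3 / 4 * θ ^ 2 * (1 - θ) ^ 2) ^ ((1:ℝ)/3) * lam ^ ((1:ℝ)/3)
          - δ * θ / (6 * σ ^ 2) * (6 / (θ * (1 - θ))) ^ ((2:ℝ)/3)
              * lam ^ ((2:ℝ)/3)))
      =O[nhdsWithin 0 (Ioi 0)] (fun lam : ℝ => lam)) ∧
    ((fun lam : ℝ => 1 / (1 + c lam / sbar lam) - 1 / (1 + c lam)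
        - (6 * θ ^ 2 * (1 - θ) ^ 2) ^ ((1:ℝ)/3) * lam ^ ((1:ℝ)/3))
      =O[nhdsWithin 0 (Ioi 0)] (fun lam : ℝ => lam)) := by
  obtain ⟨hθ₀, hθ₁⟩ := hθ
  have hθθ : 0 < θ * (1 - θ) := mul_pos hθ₀ (sub_pos.2 hθ₁)
  rw [show 3 / 4 * θ ^ 2 * (1 - θ) ^ 2 = (θ * (1 - θ) / 2) ^ 3 * (6 / (θ * (1 - θ))) by
      field_simp; ring,
    show 6 * θ ^ 2 * (1 - θ) ^ 2 = (θ * (1 - θ)) ^ 3 * (6 / (θ * (1 - θ))) by field_simp,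
    rpow_one_third_pow_three_mul (by positivity) (by positivity),
    rpow_one_third_pow_three_mul hθθ.le (by positivity), rpow_two_thirds (by positivity), ← hγ]
  rw [isBigO_sub_rpow_thirds_iff] at hc hs
  set t := fun x : ℝ => x ^ ((1:ℝ)/3)
  have ht : Tendsto t (𝓝[>] 0) (𝓝 0) := tendsto_rpow_one_third_nhdsGT_zero
  have upper := upper_boundary_expansion hθ₀.ne' hcbar hα hβ ht hc hs
  have lower := lower_boundary_expansion hθ₀.ne' hcbar hα hβ ht hc
  have hflip : ∀ᶠ x in 𝓝[>] 0, 1 / (1 + c x / sbar x) = sbar x / (sbar x + c x) :=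
    ((tendsto_of_isBigO_sub_quadratic ht hs).eventually_ne one_ne_zero).mono fun x hx => by
      rw [one_add_div hx, one_div_div]
  constructor
  · refine ((isBigO_sub_rpow_thirds_iff (f := fun x => 1 / (1 + c x / sbar x))
      θ (θ * (1 - θ) / 2 * γ) (-(δ * θ / (6 * σ ^ 2) * γ ^ 2))).2
      (upper.congr' ?_ .rfl)).congr_left fun x => by ring
    filter_upwards [hflip] with x hx
    rw [hx]
  · refine ((isBigO_sub_rpow_thirds_iff (f := fun x => 1 / (1 + c x / sbar x) - 1 / (1 + c x))
      0 (θ * (1 - θ) * γ) 0).2 ((upper.sub lower).congr' ?_ .rfl)).congr_left fun x => by ring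
    filter_upwards [hflip] with x hx
    rw [hx]
    ring

/-- Upper boundary and width of the no-trade region: from the expansions of
`c` and `s̄`,
`1/(1+c/s̄) = θ + (3θ²(1-θ)²/4)^{1/3} λ^{1/3} - (δθ/(6σ²))(6/(θ(1-θ)))^{2/3} λ^{2/3} + O(λ)`,
and the width satisfies
`1/(1+c/s̄) - 1/(1+c) = (6θ²(1-θ)²)^{1/3} λ^{1/3} + O(λ)`
(the `λ^{2/3}` terms cancel). -/
theorem upper_boundary_and_width_expansion
    (θ δ σ cbar α β γ : ℝ) (hθ : θ ∈ Ioo (0:ℝ) 1) (hδ : 0 < δ) (hσ : 0 < σ)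
    (hcbar : cbar = (1 - θ) / θ)
    (hγ : γ = (6 / (θ * (1 - θ))) ^ ((1:ℝ)/3))
    (hα : α = (1 - θ) / (2 * θ) * γ)
    (hβ : β = (2 * δ / σ ^ 2 + 3 * (1 - θ) ^ 2) / (12 * θ) * γ ^ 2)
    (c sbar : ℝ → ℝ)
    (hc : (fun lam : ℝ => c lam
        - (cbar + α * lam ^ ((1:ℝ)/3) + β * lam ^ ((2:ℝ)/3)))
      =O[nhdsWithin 0 (Ioi 0)] (fun lam : ℝ => lam))
    (hs : (fun lam : ℝ => sbar lam
        - (1 + γ * lam ^ ((1:ℝ)/3) + γ ^ 2 / 2 * lam ^ ((2:ℝ)/3)))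
      =O[nhdsWithin 0 (Ioi 0)] (fun lam : ℝ => lam)) :
    ((fun lam : ℝ => 1 / (1 + c lam / sbar lam)
        - (θ + (3 / 4 * θ ^ 2 * (1 - θ) ^ 2) ^ ((1:ℝ)/3) * lam ^ ((1:ℝ)/3)
          - δ * θ / (6 * σ ^ 2) * (6 / (θ * (1 - θ))) ^ ((2:ℝ)/3)
              * lam ^ ((2:ℝ)/3)))
      =O[nhdsWithin 0 (Ioi 0)] (fun lam : ℝ => lam)) ∧
    ((fun lam : ℝ => 1 / (1 + c lam / sbar lam) - 1 / (1 + c lam)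
        - (6 * θ ^ 2 * (1 - θ) ^ 2) ^ ((1:ℝ)/3) * lam ^ ((1:ℝ)/3))
      =O[nhdsWithin 0 (Ioi 0)] (fun lam : ℝ => lam)) :=
  upper_boundary_and_width_expansion_general θ δ σ cbar α β γ hθ hcbar hγ hα hβ c sbar hc hs
end
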